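/- arXiv:2410.17123 — 2 statements merged into one kernel-verified Lean document; each statement's English description precedes it below -/
import Mathlib

section
/- Let h₀, h₁, …, h_r be real polynomials (forms of degree d in 3 variables), and suppose there exist real numbers α_{i,j} for 0 ≤ i ≤ j ≤ r, not all zero, such that ∑_{0≤i≤j≤r} α_{i,j} h_i h_j = 0. Then ∑_{i=0}^r h_i² can be written as a sum of at most r squares of real polynomials, i.e., there exist real polynomials g₁, …, g_r with ∑_{i=0}^r h_i² = ∑_{k=1}^r g_k². -/
open MvPolynomial

private lemma expand_aux {N n : Type*} [Fintype N] [Fintype n]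
    (c : N → ℝ) (v : N → n → ℝ) (h : n → MvPolynomial (Fin 3) ℝ) :
    ∑ k : N, C (c k) * (∑ i : n, C (v k i) * h i) ^ 2 =
      ∑ i : n, ∑ j : n, C (∑ k : N, c k * v k i * v k j) * (h i * h j) := by
  have step : ∀ k : N, C (c k) * (∑ i : n, C (v k i) * h i) ^ 2 =
      ∑ i : n, ∑ j : n, C (c k * v k i * v k j) * (h i * h j) := by
    intro k
    rw [sq, Finset.sum_mul_sum, Finset.mul_sum]
    refine Finset.sum_congr rfl fun i _ => ?_
    rw [Finset.mul_sum]
    refine Finset.sum_congr rfl fun j _ => ?_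
    simp only [map_mul]
    ring
  rw [Finset.sum_congr rfl fun k _ => step k, Finset.sum_comm]
  refine Finset.sum_congr rfl fun i _ => ?_
  rw [Finset.sum_comm]
  refine Finset.sum_congr rfl fun j _ => ?_
  rw [← Finset.sum_mul, ← map_sum]

theorem stmt_3 (d r : ℕ) (h : Fin (r + 1) → MvPolynomial (Fin 3) ℝ)
    (hhom : ∀ i, (h i).IsHomogeneous d)
    (α : Fin (r + 1) → Fin (r + 1) → ℝ)
    (hα : ∃ i j : Fin (r + 1), i ≤ j ∧ α i j ≠ 0)
    (hrel : ∑ i : Fin (r + 1), ∑ j ∈ Finset.univ.filter (fun j => i ≤ j),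
        C (α i j) * h i * h j = 0) :
    ∃ g : Fin r → MvPolynomial (Fin 3) ℝ,
      ∑ i : Fin (r + 1), (h i) ^ 2 = ∑ k : Fin r, (g k) ^ 2 := by
  classical
  -- symmetrized matrix
  set β : Fin (r + 1) → Fin (r + 1) → ℝ := fun i j => if i ≤ j then α i j else 0 with hβdef
  set A : Matrix (Fin (r + 1)) (Fin (r + 1)) ℝ := Matrix.of fun i j => (β i j + β j i) / 2 with hAdef
  have hAapp : ∀ i j, A i j = (β i j + β j i) / 2 := fun i j => rfl
  -- full-sum form of the relation
  have hrelβ : ∑ i : Fin (r + 1), ∑ j : Fin (r + 1), C (β i j) * (h i * h j) = 0 := by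
    rw [← hrel]
    refine Finset.sum_congr rfl fun i _ => ?_
    rw [Finset.sum_filter]
    refine Finset.sum_congr rfl fun j _ => ?_
    by_cases hij : i ≤ j <;> simp [hβdef, hij, mul_assoc]
  have hquad : ∑ i : Fin (r + 1), ∑ j : Fin (r + 1), C (A i j) * (h i * h j) = 0 := by
    have hswap : ∑ i : Fin (r + 1), ∑ j : Fin (r + 1), C (β j i) * (h i * h j) = 0 := by
      rw [Finset.sum_comm]
      rw [← hrelβ]
      exact Finset.sum_congr rfl fun i _ => Finset.sum_congr rfl fun j _ => by ring
    calc ∑ i : Fin (r + 1), ∑ j : Fin (r + 1), C (A i j) * (h i * h j)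
        = ∑ i : Fin (r + 1), ∑ j : Fin (r + 1),
            (C ((2:ℝ)⁻¹) * (C (β i j) * (h i * h j)) +
             C ((2:ℝ)⁻¹) * (C (β j i) * (h i * h j))) := by
          refine Finset.sum_congr rfl fun i _ => Finset.sum_congr rfl fun j _ => ?_
          rw [hAapp]
          rw [show (β i j + β j i) / 2 = 2⁻¹ * β i j + 2⁻¹ * β j i by ring]
          simp only [map_add, map_mul]
          ring
      _ = C ((2:ℝ)⁻¹) * (∑ i : Fin (r + 1), ∑ j : Fin (r + 1), C (β i j) * (h i * h j)) +
          C ((2:ℝ)⁻¹) * (∑ i : Fin (r + 1), ∑ j : Fin (r + 1), C (β j i) * (h i * h j)) := by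
          simp [Finset.sum_add_distrib, Finset.mul_sum]
      _ = 0 := by rw [hrelβ, hswap]; simp
  -- A is nonzero and Hermitian
  have hA0 : A ≠ 0 := by
    obtain ⟨i, j, hij, hne⟩ := hα
    intro hA
    have h1 : A i j = 0 := by rw [hA]; rfl
    rcases eq_or_lt_of_le hij with rfl | hlt
    · rw [hAapp] at h1
      simp [hβdef] at h1
      exact hne h1
    · rw [hAapp] at h1
      have : β j i = 0 := by simp [hβdef, not_le_of_gt hlt]
      rw [this, add_zero, div_eq_zero_iff] at h1
      rcases h1 with h1 | h1
      · exact hne (by simpa [hβdef, hij] using h1)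
      · norm_num at h1
  have hA : A.IsHermitian := by
    ext i j
    simp only [Matrix.conjTranspose_apply, hAapp, star_trivial]
    ring
  set U : Matrix (Fin (r + 1)) (Fin (r + 1)) ℝ := (hA.eigenvectorUnitary : Matrix (Fin (r + 1)) (Fin (r + 1)) ℝ)
    with hUdef
  set μ : Fin (r + 1) → ℝ := hA.eigenvalues with hμdef
  have hspec : A = U * Matrix.diagonal μ * star U := by
    have := hA.spectral_theorem
    simpa using this
  have hAentry : ∀ i j, A i j = ∑ k, μ k * U i k * U j k := by
    intro i j
    rw [hspec]
    simp only [Matrix.mul_apply, Matrix.diagonal_apply, Matrix.star_apply, star_trivial,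
      mul_ite, mul_zero, Finset.sum_ite_eq', Finset.mem_univ, if_true]
    refine Finset.sum_congr rfl fun k _ => ?_
    ring
  have hUorth : ∀ i j, ∑ k, U i k * U j k = if i = j then (1:ℝ) else 0 := by
    intro i j
    have hmem : U * star U = 1 :=
      (Matrix.mem_unitaryGroup_iff).mp hA.eigenvectorUnitary.2
    have := congrFun (congrFun hmem i) j
    simpa [Matrix.mul_apply, Matrix.one_apply, Matrix.star_apply] using this
  -- p vectors
  set p : Fin (r + 1) → MvPolynomial (Fin 3) ℝ := fun k => ∑ i, C (U i k) * h i with hpdef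
  have hsum1 : ∑ k, (p k) ^ 2 = ∑ i, (h i) ^ 2 := by
    have := expand_aux (fun _ : Fin (r + 1) => (1:ℝ)) (fun k i => U i k) h
    simp only [map_one, one_mul] at this
    rw [hpdef]
    simp only []
    rw [this]
    refine Finset.sum_congr rfl fun i _ => ?_
    rw [Finset.sum_congr rfl fun j (_ : j ∈ Finset.univ) =>
      congrArg (fun t => C t * (h i * h j)) (hUorth i j)]
    simp [sq, Finset.sum_ite_eq]
  have hsum2 : ∑ k, C (μ k) * (p k) ^ 2 = 0 := by
    have := expand_aux μ (fun k i => U i k) h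
    rw [hpdef]
    simp only []
    rw [this, ← hquad]
    refine Finset.sum_congr rfl fun i _ => Finset.sum_congr rfl fun j _ => ?_
    rw [hAentry i j]
  -- choose eigenvalue
  have hμne : ∃ k, μ k ≠ 0 := by
    by_contra hall
    push_neg at hall
    apply hA0
    rw [hspec]
    have : Matrix.diagonal μ = 0 := by
      ext i j; simp [Matrix.diagonal_apply, hall]
    rw [this, Matrix.mul_zero, Matrix.zero_mul]
  obtain ⟨k₁, hk₁⟩ := hμne
  have hchoice : ∃ k₀, μ k₀ ≠ 0 ∧ ∀ j, μ j / μ k₀ ≤ 1 := by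
    by_cases hpos : ∃ k, 0 < μ k
    · obtain ⟨k₀, _, hmax⟩ := Finset.exists_max_image Finset.univ μ ⟨k₁, Finset.mem_univ k₁⟩
      obtain ⟨k, hk⟩ := hpos
      have hlam : 0 < μ k₀ := lt_of_lt_of_le hk (hmax k (Finset.mem_univ k))
      exact ⟨k₀, ne_of_gt hlam, fun j => (div_le_one hlam).2 (hmax j (Finset.mem_univ j))⟩
    · push_neg at hpos
      obtain ⟨k₀, _, hmin⟩ := Finset.exists_min_image Finset.univ μ ⟨k₁, Finset.mem_univ k₁⟩
      have hlam : μ k₀ < 0 := by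
        have := hmin k₁ (Finset.mem_univ k₁)
        have h2 : μ k₁ < 0 := lt_of_le_of_ne (hpos k₁) hk₁
        exact lt_of_le_of_lt this h2
      refine ⟨k₀, ne_of_lt hlam, fun j => ?_⟩
      have h1 : μ j * (μ k₀)⁻¹ ≤ μ k₀ * (μ k₀)⁻¹ :=
        mul_le_mul_of_nonpos_right (hmin j (Finset.mem_univ j))
          (inv_nonpos.2 (le_of_lt hlam))
      rw [mul_inv_cancel₀ (ne_of_lt hlam)] at h1
      rwa [div_eq_mul_inv]
  obtain ⟨k₀, hlamne, hdiv⟩ := hchoice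
  set c : Fin (r + 1) → ℝ := fun j => 1 - μ j / μ k₀ with hcdef
  have hc0 : ∀ j, 0 ≤ c j := fun j => by simp [hcdef]; exact hdiv j
  have hck₀ : c k₀ = 0 := by simp [hcdef, div_self hlamne]
  have hmain : ∑ i, (h i) ^ 2 = ∑ k, C (c k) * (p k) ^ 2 := by
    have expand : ∀ k, C (c k) * (p k) ^ 2 =
        (p k) ^ 2 - C ((μ k₀)⁻¹) * (C (μ k) * (p k) ^ 2) := by
      intro k
      rw [hcdef]
      simp only [div_eq_mul_inv, map_sub, map_mul, map_one]
      ring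
    rw [Finset.sum_congr rfl fun k _ => expand k, Finset.sum_sub_distrib,
      ← Finset.mul_sum, hsum2, mul_zero, sub_zero, hsum1]
  refine ⟨fun m => C (Real.sqrt (c (k₀.succAbove m))) * p (k₀.succAbove m), ?_⟩
  rw [hmain, Fin.sum_univ_succAbove (fun k => C (c k) * (p k) ^ 2) k₀, hck₀]
  simp only [map_zero, zero_mul, zero_add]
  refine Finset.sum_congr rfl fun m _ => ?_
  rw [mul_pow, ← map_pow, sq (Real.sqrt _), Real.mul_self_sqrt (hc0 _)]
end

section
/- Let h₀, …, h_r be forms of degree d in ℝ[x₁,x₂,x₃] and let L be a linear functional on forms of degree 2d given by L(g) = ⟨q − p, g⟩ where p = ∑ h_i². Suppose p locally minimizes g ↦ ‖q − g‖² over the image of the sum-of-squares map Φ(a₀,…,a_r) = ∑ a_i². Then: (first-order condition) L(∑ h_i a_i) = 0 for all forms a₀,…,a_r of degree d; and (second-order condition) L(∑ a_i²) ≤ 0 whenever ∑ a_i h_i = 0. -/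
/-!
Perturb `h` along `t ↦ h + t • a`. Since `∑ (hᵢ + t aᵢ)² = p + 2t S + t² T` with
`S = ∑ hᵢ aᵢ`, `T = ∑ aᵢ²`, the squared distance to `q` changes by
`-4t ⟨q - p, S⟩ + t² (4 ⟨S, S⟩ - 2 ⟨q - p, T⟩) + O(t³)`, which local minimality makes
nonnegative for small `t`. Hence the linear coefficient vanishes, and when `S = 0` the quadratic
coefficient `-2 ⟨q - p, T⟩` is nonnegative.
-/

open MvPolynomial

/-- The coefficientwise inner product on real polynomials in three variables
(the monomial basis is orthonormal). -/
noncomputable def pInner (f g : MvPolynomial (Fin 3) ℝ) : ℝ :=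
  ∑ m ∈ f.support, f.coeff m * g.coeff m

open Filter Topology

lemma nonneg_of_eventually_nonneg_add_mul {l : Filter ℝ} [l.NeBot] (hl : l ≤ 𝓝 0) {c : ℝ}
    {g : ℝ → ℝ} (hg : ContinuousAt g 0) (h : ∀ᶠ t in l, 0 ≤ c + t * g t) : 0 ≤ c := by
  have hlim : Tendsto (fun t => c + t * g t) l (𝓝 c) := by
    have : ContinuousAt (fun t => c + t * g t) 0 := continuousAt_const.add (continuousAt_id.mul hg)
    simpa using this.tendsto.mono_left hl
  exact ge_of_tendsto hlim h

lemma eq_zero_of_eventually_nonneg_mul_add_mul {c : ℝ} {g : ℝ → ℝ} (hg : ContinuousAt g 0)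
    (h : ∀ᶠ t in 𝓝 0, 0 ≤ t * (c + t * g t)) : c = 0 := by
  have hpos : 0 ≤ c := nonneg_of_eventually_nonneg_add_mul (l := 𝓝[>] 0) nhdsWithin_le_nhds hg <|
    (h.filter_mono nhdsWithin_le_nhds).and self_mem_nhdsWithin |>.mono
      fun t ⟨ht, (htpos : 0 < t)⟩ => nonneg_of_mul_nonneg_right (by linarith) htpos
  have hneg : 0 ≤ -c := nonneg_of_eventually_nonneg_add_mul (l := 𝓝[<] 0)
    (g := fun t => -g t) nhdsWithin_le_nhds hg.neg <|
    (h.filter_mono nhdsWithin_le_nhds).and self_mem_nhdsWithin |>.mono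
      fun t ⟨ht, (htneg : t < 0)⟩ => by nlinarith
  linarith

lemma nonneg_of_eventually_nonneg_sq_mul_add_mul {c : ℝ} {g : ℝ → ℝ} (hg : ContinuousAt g 0)
    (h : ∀ᶠ t in 𝓝 0, 0 ≤ t ^ 2 * (c + t * g t)) : 0 ≤ c :=
  nonneg_of_eventually_nonneg_add_mul (l := 𝓝[>] 0) nhdsWithin_le_nhds hg <|
    (h.filter_mono nhdsWithin_le_nhds).and self_mem_nhdsWithin |>.mono
      fun t ⟨ht, (htpos : 0 < t)⟩ => nonneg_of_mul_nonneg_right ht (by positivity)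

namespace LinearMap.BilinForm.IsSymm

variable {M : Type*} [AddCommGroup M] [Module ℝ M] {B : LinearMap.BilinForm ℝ M}

lemma apply_sub_smul_sub_smul (hB : B.IsSymm) (u S T : M) (t : ℝ) :
    B (u - (2 * t) • S - t ^ 2 • T) (u - (2 * t) • S - t ^ 2 • T) =
      B u u + t * (-4 * B u S +
        t * (4 * B S S - 2 * B u T + t * (4 * B S T + t * B T T))) := by
  simp only [map_sub, map_smul, LinearMap.sub_apply, LinearMap.smul_apply, smul_eq_mul]
  rw [hB.eq S u, hB.eq T u, hB.eq T S]
  ring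

lemma apply_eq_zero_of_eventually_le (hB : B.IsSymm) {u S T : M}
    (h : ∀ᶠ t in 𝓝 (0 : ℝ),
      B u u ≤ B (u - (2 * t) • S - t ^ 2 • T) (u - (2 * t) • S - t ^ 2 • T)) :
    B u S = 0 := by
  have hc : -4 * B u S = 0 :=
    eq_zero_of_eventually_nonneg_mul_add_mul
      (g := fun t => 4 * B S S - 2 * B u T + t * (4 * B S T + t * B T T)) (by fun_prop) <|
      h.mono fun t ht => by rw [hB.apply_sub_smul_sub_smul] at ht; linarith
  linarith

lemma apply_nonpos_of_eventually_le (hB : B.IsSymm) {u T : M}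
    (h : ∀ᶠ t in 𝓝 (0 : ℝ), B u u ≤ B (u - t ^ 2 • T) (u - t ^ 2 • T)) :
    B u T ≤ 0 := by
  have hc : 0 ≤ -2 * B u T :=
    nonneg_of_eventually_nonneg_sq_mul_add_mul (g := fun t => t * B T T) (by fun_prop) <|
      h.mono fun t ht => by
        simp only [map_sub, map_smul, LinearMap.sub_apply, LinearMap.smul_apply,
          smul_eq_mul, hB.eq T u] at ht
        linarith
  linarith

end LinearMap.BilinForm.IsSymm

lemma Finset.sum_add_smul_sq {ι A : Type*} [CommRing A] [Algebra ℝ A] (s : Finset ι)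
    (h a : ι → A) (t : ℝ) :
    ∑ i ∈ s, (h i + t • a i) ^ 2 =
      ∑ i ∈ s, h i ^ 2 + (2 * t) • ∑ i ∈ s, h i * a i + t ^ 2 • ∑ i ∈ s, a i ^ 2 := by
  simp only [Algebra.smul_def, Finset.mul_sum, ← Finset.sum_add_distrib]
  exact Finset.sum_congr rfl fun i _ => by simp only [map_mul, map_pow, map_ofNat]; ring

lemma pInner_eq_sum_of_support_subset {f g : MvPolynomial (Fin 3) ℝ}
    {s : Finset (Fin 3 →₀ ℕ)} (hs : f.support ⊆ s) :
    pInner f g = ∑ m ∈ s, f.coeff m * g.coeff m :=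
  Finset.sum_subset hs fun m _ hm => by simp [notMem_support_iff.mp hm]

lemma pInner_comm (f g : MvPolynomial (Fin 3) ℝ) : pInner f g = pInner g f := by
  rw [pInner_eq_sum_of_support_subset (s := f.support ∪ g.support) Finset.subset_union_left,
    pInner_eq_sum_of_support_subset (s := f.support ∪ g.support) Finset.subset_union_right]
  exact Finset.sum_congr rfl fun m _ => mul_comm _ _

lemma pInner_add_left (f₁ f₂ g : MvPolynomial (Fin 3) ℝ) :
    pInner (f₁ + f₂) g = pInner f₁ g + pInner f₂ g := by
  set s := f₁.support ∪ f₂.support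
  rw [pInner_eq_sum_of_support_subset (s := s) support_add,
    pInner_eq_sum_of_support_subset (s := s) Finset.subset_union_left,
    pInner_eq_sum_of_support_subset (s := s) Finset.subset_union_right, ← Finset.sum_add_distrib]
  exact Finset.sum_congr rfl fun m _ => by rw [coeff_add, add_mul]

lemma pInner_smul_left (c : ℝ) (f g : MvPolynomial (Fin 3) ℝ) :
    pInner (c • f) g = c * pInner f g := by
  rw [pInner_eq_sum_of_support_subset support_smul, pInner, Finset.mul_sum]
  exact Finset.sum_congr rfl fun m _ => by rw [coeff_smul, smul_eq_mul, mul_assoc]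

noncomputable def pInnerBilin : LinearMap.BilinForm ℝ (MvPolynomial (Fin 3) ℝ) :=
  LinearMap.mk₂ ℝ pInner pInner_add_left pInner_smul_left
    (fun f g₁ g₂ => by simp only [pInner_comm f, pInner_add_left])
    (fun c f g => by simp only [pInner_comm f, pInner_smul_left, smul_eq_mul])

lemma pInnerBilin_isSymm : pInnerBilin.IsSymm := ⟨pInner_comm⟩

lemma eventually_forall_pInner_smul_lt {ι : Type*} [Finite ι] (a : ι → MvPolynomial (Fin 3) ℝ)
    {δ : ℝ} (hδ : 0 < δ) : ∀ᶠ t in 𝓝 (0 : ℝ), ∀ i, pInner (t • a i) (t • a i) < δ := by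
  refine eventually_all.2 fun i => ?_
  simp only [pInner_smul_left, pInner_comm (a i), pInner_smul_left]
  exact (Continuous.tendsto' (by fun_prop) 0 0 (by simp)).eventually_lt_const hδ

theorem stmt_17_general (d r : ℕ) (h : Fin (r + 1) → MvPolynomial (Fin 3) ℝ)
    (hhom : ∀ i, (h i).IsHomogeneous d)
    (q : MvPolynomial (Fin 3) ℝ)
    (p : MvPolynomial (Fin 3) ℝ) (hp : p = ∑ i, (h i) ^ 2)
    (hmin : ∃ δ > (0:ℝ), ∀ a : Fin (r + 1) → MvPolynomial (Fin 3) ℝ,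
      (∀ i, (a i).IsHomogeneous d) →
      (∀ i, pInner (a i - h i) (a i - h i) < δ) →
      pInner (q - p) (q - p) ≤
        pInner (q - ∑ i, (a i) ^ 2) (q - ∑ i, (a i) ^ 2)) :
    (∀ a : Fin (r + 1) → MvPolynomial (Fin 3) ℝ, (∀ i, (a i).IsHomogeneous d) →
      pInner (q - p) (∑ i, h i * a i) = 0) ∧
    (∀ a : Fin (r + 1) → MvPolynomial (Fin 3) ℝ, (∀ i, (a i).IsHomogeneous d) →
      ∑ i, a i * h i = 0 →
      pInner (q - p) (∑ i, (a i) ^ 2) ≤ 0) := by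
  obtain ⟨δ, hδ, hmin⟩ := hmin
  subst hp
  have hcurve : ∀ a : Fin (r + 1) → MvPolynomial (Fin 3) ℝ, (∀ i, (a i).IsHomogeneous d) →
      ∀ᶠ t in 𝓝 (0 : ℝ), pInnerBilin (q - ∑ i, h i ^ 2) (q - ∑ i, h i ^ 2) ≤
        pInnerBilin (q - ∑ i, h i ^ 2 - (2 * t) • ∑ i, h i * a i - t ^ 2 • ∑ i, a i ^ 2)
          (q - ∑ i, h i ^ 2 - (2 * t) • ∑ i, h i * a i - t ^ 2 • ∑ i, a i ^ 2) := by
    intro a ha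
    filter_upwards [eventually_forall_pInner_smul_lt a hδ] with t ht
    have hperturb := hmin (fun i => h i + t • a i)
      (fun i => (hhom i).add (Submodule.smul_mem (homogeneousSubmodule (Fin 3) ℝ d) t (ha i)))
      (by simpa only [add_sub_cancel_left] using ht)
    rwa [Finset.sum_add_smul_sq, ← sub_sub, ← sub_sub] at hperturb
  refine ⟨fun a ha => pInnerBilin_isSymm.apply_eq_zero_of_eventually_le (hcurve a ha),
    fun a ha hsum => pInnerBilin_isSymm.apply_nonpos_of_eventually_le ?_⟩
  have hsum' : ∑ i, h i * a i = 0 := by simpa only [mul_comm] using hsum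
  simpa only [hsum', smul_zero, sub_zero] using hcurve a ha

theorem stmt_17 (d r : ℕ) (h : Fin (r + 1) → MvPolynomial (Fin 3) ℝ)
    (hhom : ∀ i, (h i).IsHomogeneous d)
    (q : MvPolynomial (Fin 3) ℝ) (hq : q.IsHomogeneous (2 * d))
    (p : MvPolynomial (Fin 3) ℝ) (hp : p = ∑ i, (h i) ^ 2)
    (hmin : ∃ δ > (0:ℝ), ∀ a : Fin (r + 1) → MvPolynomial (Fin 3) ℝ,
      (∀ i, (a i).IsHomogeneous d) →
      (∀ i, pInner (a i - h i) (a i - h i) < δ) →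
      pInner (q - p) (q - p) ≤
        pInner (q - ∑ i, (a i) ^ 2) (q - ∑ i, (a i) ^ 2)) :
    (∀ a : Fin (r + 1) → MvPolynomial (Fin 3) ℝ, (∀ i, (a i).IsHomogeneous d) →
      pInner (q - p) (∑ i, h i * a i) = 0) ∧
    (∀ a : Fin (r + 1) → MvPolynomial (Fin 3) ℝ, (∀ i, (a i).IsHomogeneous d) →
      ∑ i, a i * h i = 0 →
      pInner (q - p) (∑ i, (a i) ^ 2) ≤ 0) :=
  stmt_17_general d r h hhom q p hp hmin
end
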